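/- arXiv:1112.1564 — 2 statements merged into one kernel-verified Lean document; each statement's English description precedes it below -/
import Mathlib

section
/- Let B = (b_1, …, b_n) be a 3/4-LLL reduced basis and let v_1, v_2 ∈ L(B) be vectors with ‖v_1‖ = ‖v_2‖ = λ1(L(B)) and v_1 ≠ ±v_2, and let v_1', v_2' ∈ L(B') be the corresponding vectors in the lifted lattice. Then |‖v_1'‖² − ‖v_2'‖²| ≥ 2^{-4n²}. -/
noncomputable section

/-- The lattice generated by the vectors `B i`: all integer linear combinations. -/
def latticeOf {m n : ℕ} (B : Fin n → EuclideanSpace ℝ (Fin m)) :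
    Set (EuclideanSpace ℝ (Fin m)) :=
  {v | ∃ x : Fin n → ℤ, v = ∑ i, (x i : ℝ) • B i}

/-- `λ₁ L`: the minimum Euclidean norm of a nonzero vector of `L`. -/
def lambda1 {m : ℕ} (L : Set (EuclideanSpace ℝ (Fin m))) : ℝ :=
  sInf {r | ∃ v ∈ L, v ≠ 0 ∧ ‖v‖ = r}

/-- `λ₂ L`: the smallest `r` such that `L` contains two linearly independent
vectors of norm at most `r`. -/
def lambda2 {m : ℕ} (L : Set (EuclideanSpace ℝ (Fin m))) : ℝ :=
  sInf {r | ∃ v ∈ L, ∃ w ∈ L, LinearIndependent ℝ ![v, w] ∧ ‖v‖ ≤ r ∧ ‖w‖ ≤ r}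

instance (n : ℕ) : WellFoundedLT (Fin n) := inferInstance

/-- The Gram–Schmidt coefficient `μ i j = ⟨b i, b̃ j⟩ / ⟨b̃ j, b̃ j⟩`. -/
def mu {m n : ℕ} (B : Fin n → EuclideanSpace ℝ (Fin m)) (i j : Fin n) : ℝ :=
  (inner ℝ (B i) (InnerProductSpace.gramSchmidt ℝ B j) : ℝ) /
    (inner ℝ (InnerProductSpace.gramSchmidt ℝ B j) (InnerProductSpace.gramSchmidt ℝ B j) : ℝ)

/-- `B` is a 3/4-LLL reduced basis. -/
def LLLReduced {m n : ℕ} (B : Fin n → EuclideanSpace ℝ (Fin m)) : Prop :=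
  (∀ i j : Fin n, j < i → |mu B i j| ≤ 1 / 2) ∧
  (∀ i : Fin n, ∀ h : (i : ℕ) + 1 < n,
    (3 / 4 : ℝ) * ‖InnerProductSpace.gramSchmidt ℝ B i‖ ^ 2 ≤
      ‖mu B ⟨(i : ℕ) + 1, h⟩ i • InnerProductSpace.gramSchmidt ℝ B i + InnerProductSpace.gramSchmidt ℝ B ⟨(i : ℕ) + 1, h⟩‖ ^ 2)

/-- The lifted basis `B'` in `ℝ^(m+n)`: `b'ᵢ` agrees with `bᵢ` on the first `m`
coordinates, has `2^(2(i-1)n)/2^(2n²)` in coordinate `m+i` and `0` elsewhere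
(here `i : Fin n` is the zero-based index, corresponding to `i-1` in one-based notation). -/
def lifted {m n : ℕ} (B : Fin n → EuclideanSpace ℝ (Fin m)) :
    Fin n → EuclideanSpace ℝ (Fin (m + n)) :=
  fun i => (EuclideanSpace.equiv (Fin (m + n)) ℝ).symm
    (fun j => if h : (j : ℕ) < m then B i ⟨j, h⟩
      else if (j : ℕ) = m + (i : ℕ) then (2 : ℝ) ^ (2 * (i : ℕ) * n) / 2 ^ (2 * n ^ 2) else 0)

open Finset InnerProductSpace

/-!
For `v = ∑ xᵢ bᵢ` the lift adds `∑ xᵢ² 2^(4in) / 2^(4n²)` to `‖v‖²`, so the difference of the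
lifted squared norms of two shortest vectors is `S / 2^(4n²)` with the integer
`S = ∑ (αᵢ² - βᵢ²) (2^(4n))ⁱ`. In an LLL-reduced basis the coefficients of a shortest vector are
at most `4^(n-1)`: the Gram–Schmidt coefficients `xⱼ + ∑_{i>j} μᵢⱼ xᵢ = ⟪v, b̃ⱼ⟫ / ‖b̃ⱼ‖²` are
bounded through `‖v‖ ≤ ‖b₁‖ = ‖b̃₁‖ ≤ 2^(j/2) ‖b̃ⱼ‖`, and back-substitution with `|μᵢⱼ| ≤ 1/2`
bounds the `xⱼ` themselves. So the base-`2^(4n)` digits `αᵢ² - βᵢ²` of `S` are too small to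
cancel, and `S = 0` would force `αᵢ² = βᵢ²` for all `i`. Then `v₁ ± v₂ ∈ 2L` are nonzero, hence
`‖v₁ ± v₂‖ ≥ 2λ₁`, which contradicts the parallelogram law `‖v₁ + v₂‖² + ‖v₁ - v₂‖² = 4λ₁²`.
-/

lemma Int.eq_zero_of_sum_mul_pow_eq_zero {M : ℤ} :
    ∀ {n : ℕ} {c : Fin n → ℤ}, (∀ i, |c i| < M) → ∑ i, c i * M ^ (i : ℕ) = 0 → c = 0
  | 0, _, _, _ => funext fun i => i.elim0
  | n + 1, c, hc, hsum => by
    rw [Fin.sum_univ_succ, Fin.val_zero, pow_zero, mul_one] at hsum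
    have hM : M ≠ 0 := ((abs_nonneg _).trans_lt (hc 0)).ne'
    have htail : ∑ i : Fin n, c i.succ * M ^ (i.succ : ℕ) =
        M * ∑ i : Fin n, c i.succ * M ^ (i : ℕ) := by
      rw [mul_sum]; exact sum_congr rfl fun i _ => by rw [Fin.val_succ, pow_succ]; ring
    have hc0 : c 0 = 0 := Int.eq_zero_of_abs_lt_dvd
      ⟨-∑ i : Fin n, c i.succ * M ^ (i : ℕ), by linear_combination hsum - htail⟩ (hc 0)
    rw [htail, hc0, zero_add, mul_eq_zero, or_iff_right hM] at hsum
    have hrest := Int.eq_zero_of_sum_mul_pow_eq_zero (fun i => hc i.succ) hsum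
    funext i
    exact Fin.cases hc0 (fun i => congrFun hrest i) i

lemma eq_zero_of_two_mul_norm_le_norm_add_of_le_norm_sub {E : Type*} [NormedAddCommGroup E]
    [InnerProductSpace ℝ E] {v w : E} (h : ‖v‖ = ‖w‖) (hadd : 2 * ‖v‖ ≤ ‖v + w‖)
    (hsub : 2 * ‖v‖ ≤ ‖v - w‖) : v = 0 := by
  have hpar := parallelogram_law_with_norm ℝ v w
  rw [← h] at hpar
  have h2 : (2 * ‖v‖) ^ 2 ≤ ‖v + w‖ ^ 2 := pow_le_pow_left₀ (by positivity) hadd 2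
  have h3 : (2 * ‖v‖) ^ 2 ≤ ‖v - w‖ ^ 2 := pow_le_pow_left₀ (by positivity) hsub 2
  have hv : ‖v‖ ^ 2 ≤ 0 := by linarith
  exact norm_eq_zero.mp (pow_eq_zero_iff two_ne_zero |>.mp (hv.antisymm (sq_nonneg _)))

/- `2K((3/2)^(n-j) - 1)` solves `Tⱼ = K + (3/2) Tⱼ₊₁`, which is what the hypothesis gives for
`Tⱼ = ∑_{i>j} aᵢ` after splitting off `a_{j+1}`. -/
lemma sum_Ioi_le_of_le_add_half_sum_Ioi {n : ℕ} {a : Fin (n + 1) → ℝ} {K : ℝ}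
    (ha : ∀ j, a j ≤ K + (∑ i ∈ Ioi j, a i) / 2) (j : Fin (n + 1)) :
    ∑ i ∈ Ioi j, a i ≤ 2 * K * ((3 / 2) ^ (n - j : ℕ) - 1) := by
  induction j using Fin.reverseInduction with
  | last => simp [← Fin.top_eq_last]
  | cast i ih =>
    have hIoi : Ioi i.castSucc = insert i.succ (Ioi i.succ) := by
      ext k
      simp only [mem_Ioi, mem_insert, Fin.lt_def, Fin.ext_iff, Fin.val_succ, Fin.val_castSucc]
      omega
    have hexp : n - (i.castSucc : ℕ) = n - (i.succ : ℕ) + 1 := by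
      simp only [Fin.val_succ, Fin.val_castSucc]
      omega
    rw [hIoi, sum_insert (by simp), hexp, pow_succ]
    linarith [ha i.succ]

lemma le_mul_pow_of_le_add_half_sum_Ioi {n : ℕ} {a : Fin (n + 1) → ℝ} {K : ℝ}
    (ha : ∀ j, a j ≤ K + (∑ i ∈ Ioi j, a i) / 2) (j : Fin (n + 1)) :
    a j ≤ K * (3 / 2) ^ (n - j : ℕ) := by
  linarith [ha j, sum_Ioi_le_of_le_add_half_sum_Ioi ha j]

lemma lambda1_le_norm {m : ℕ} {L : Set (EuclideanSpace ℝ (Fin m))}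
    {w : EuclideanSpace ℝ (Fin m)} (hw : w ∈ L) (hw0 : w ≠ 0) : lambda1 L ≤ ‖w‖ :=
  csInf_le ⟨0, fun _ ⟨v, _, _, hv⟩ => hv ▸ norm_nonneg v⟩ ⟨w, hw, hw0, rfl⟩

section Lattice

variable {m n : ℕ} (B : Fin n → EuclideanSpace ℝ (Fin m))

lemma mem_latticeOf_self (k : Fin n) : B k ∈ latticeOf B :=
  ⟨Pi.single k 1, by simp [Pi.single_apply]⟩

lemma two_mul_lambda1_le_norm_of_even {x : Fin n → ℤ} (hx : ∀ i, Even (x i))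
    (h0 : ∑ i, (x i : ℝ) • B i ≠ 0) : 2 * lambda1 (latticeOf B) ≤ ‖∑ i, (x i : ℝ) • B i‖ := by
  choose y hy using hx
  have hxy : ∑ i, (x i : ℝ) • B i = (2 : ℝ) • ∑ i, (y i : ℝ) • B i := by
    simp only [hy, smul_sum, smul_smul]; push_cast; ring_nf
  rw [hxy] at h0 ⊢
  rw [norm_smul, Real.norm_two]
  exact mul_le_mul_of_nonneg_left (lambda1_le_norm ⟨y, rfl⟩ (right_ne_zero_of_smul h0)) zero_le_two

variable {B}

lemma exists_sq_ne_of_norm_eq_lambda1 {α β : Fin n → ℤ}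
    (h₁ : ‖∑ i, (α i : ℝ) • B i‖ = lambda1 (latticeOf B))
    (h₂ : ‖∑ i, (β i : ℝ) • B i‖ = lambda1 (latticeOf B))
    (hne : (∑ i, (α i : ℝ) • B i) ≠ ∑ i, (β i : ℝ) • B i)
    (hne' : (∑ i, (α i : ℝ) • B i) ≠ -∑ i, (β i : ℝ) • B i) :
    ∃ i, α i ^ 2 ≠ β i ^ 2 := by
  by_contra! hsq
  have hpar : ∀ i, (Even (α i) ↔ Even (β i)) := fun i => by
    rw [← Int.even_pow' two_ne_zero, hsq i, Int.even_pow' two_ne_zero]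
  have hadd := two_mul_lambda1_le_norm_of_even B (x := fun i => α i + β i)
    (fun i => Int.even_add.mpr (hpar i))
    (by push_cast [add_smul, sum_add_distrib]; exact fun h => hne' (eq_neg_of_add_eq_zero_left h))
  have hsub := two_mul_lambda1_le_norm_of_even B (x := fun i => α i - β i)
    (fun i => Int.even_sub.mpr (hpar i))
    (by push_cast [sub_smul, sum_sub_distrib]; exact sub_ne_zero.mpr hne)
  push_cast [add_smul, sub_smul, sum_add_distrib, sum_sub_distrib] at hadd hsub
  rw [← h₁] at hadd hsub
  have hv₁ := eq_zero_of_two_mul_norm_le_norm_add_of_le_norm_sub (h₁.trans h₂.symm) hadd hsub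
  have hv₂ : ∑ i, (β i : ℝ) • B i = 0 := norm_eq_zero.mp (by rw [h₂, ← h₁, hv₁, norm_zero])
  exact hne (hv₁.trans hv₂.symm)

end Lattice

section Lifted

variable {m n : ℕ} (B : Fin n → EuclideanSpace ℝ (Fin m))

lemma lifted_apply_castAdd (i : Fin n) (j : Fin m) : lifted B i (Fin.castAdd n j) = B i j := by
  simp [lifted, EuclideanSpace.equiv]

lemma lifted_apply_natAdd (i k : Fin n) :
    lifted B i (Fin.natAdd m k) = if i = k then 2 ^ (2 * (i : ℕ) * n) / 2 ^ (2 * n ^ 2) else 0 := by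
  simp [lifted, EuclideanSpace.equiv, Fin.val_inj, eq_comm]

lemma norm_sum_smul_lifted_sq (x : Fin n → ℝ) :
    ‖∑ i, x i • lifted B i‖ ^ 2 =
      ‖∑ i, x i • B i‖ ^ 2 + (∑ i, x i ^ 2 * (2 ^ (4 * n)) ^ (i : ℕ)) / 2 ^ (4 * n ^ 2) := by
  rw [EuclideanSpace.norm_sq_eq, EuclideanSpace.norm_sq_eq, Fin.sum_univ_add, sum_div]
  congr 1
  · simp [lifted_apply_castAdd]
  · refine sum_congr rfl fun k _ => ?_
    simp only [WithLp.ofLp_sum, Finset.sum_apply, WithLp.ofLp_smul, Pi.smul_apply, smul_eq_mul,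
      lifted_apply_natAdd, mul_ite, mul_zero, sum_ite_eq', mem_univ, if_true, Real.norm_eq_abs,
      sq_abs]
    rw [mul_pow, div_pow, ← pow_mul, ← pow_mul, ← pow_mul]
    ring_nf

end Lifted

section GramSchmidt

variable {m n : ℕ} {B : Fin n → EuclideanSpace ℝ (Fin m)}

lemma real_inner_gramSchmidt_eq_norm_sq (j : Fin n) :
    ⟪gramSchmidt ℝ B j, B j⟫_ℝ = ‖gramSchmidt ℝ B j‖ ^ 2 := by
  conv_lhs => rw [gramSchmidt_def'' ℝ B j]
  rw [inner_add_right, inner_sum, real_inner_self_eq_norm_sq, add_eq_left]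
  exact sum_eq_zero fun i hi => by
    rw [real_inner_smul_right, gramSchmidt_orthogonal ℝ B (mem_Iio.mp hi).ne', mul_zero]

lemma inner_gramSchmidt_eq_mu_mul {j : Fin n} (hj : gramSchmidt ℝ B j ≠ 0) (i : Fin n) :
    ⟪gramSchmidt ℝ B j, B i⟫_ℝ = mu B i j * ‖gramSchmidt ℝ B j‖ ^ 2 := by
  rw [mu, real_inner_comm, real_inner_self_eq_norm_sq, div_mul_cancel₀ _ (by positivity)]

lemma mu_self {j : Fin n} (hj : gramSchmidt ℝ B j ≠ 0) : mu B j j = 1 := by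
  rw [mu, real_inner_comm, real_inner_gramSchmidt_eq_norm_sq, real_inner_self_eq_norm_sq,
    div_self (by positivity)]

lemma mu_eq_zero_of_lt {i j : Fin n} (h : i < j) : mu B i j = 0 := by
  rw [mu, real_inner_comm, gramSchmidt_inv_triangular ℝ B h, zero_div]

lemma inner_gramSchmidt_sum_smul {j : Fin n} (hj : gramSchmidt ℝ B j ≠ 0) (x : Fin n → ℝ) :
    ⟪gramSchmidt ℝ B j, ∑ i, x i • B i⟫_ℝ = (∑ i, x i * mu B i j) * ‖gramSchmidt ℝ B j‖ ^ 2 := by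
  simp only [inner_sum, real_inner_smul_right, inner_gramSchmidt_eq_mu_mul hj, sum_mul, mul_assoc]

lemma sum_mul_mu_eq_add_sum_Ioi {j : Fin n} (hj : gramSchmidt ℝ B j ≠ 0) (x : Fin n → ℝ) :
    ∑ i, x i * mu B i j = x j + ∑ i ∈ Ioi j, x i * mu B i j := by
  rw [← sum_subset (subset_univ (Ici j)) fun i _ hi => by
      rw [mu_eq_zero_of_lt (not_le.mp (by simpa using hi)), mul_zero],
    ← Ioi_insert, sum_insert (by simp), mu_self hj, mul_one]

end GramSchmidt

namespace LLLReduced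

variable {m n : ℕ} {B : Fin (n + 1) → EuclideanSpace ℝ (Fin m)}

lemma norm_gramSchmidt_castSucc_sq_le (hLLL : LLLReduced B) (i : Fin n) :
    ‖gramSchmidt ℝ B i.castSucc‖ ^ 2 ≤ 2 * ‖gramSchmidt ℝ B i.succ‖ ^ 2 := by
  have hlovasz : 3 / 4 * ‖gramSchmidt ℝ B i.castSucc‖ ^ 2 ≤
      ‖mu B i.succ i.castSucc • gramSchmidt ℝ B i.castSucc + gramSchmidt ℝ B i.succ‖ ^ 2 :=
    hLLL.2 i.castSucc (by simp)
  have hsize : |mu B i.succ i.castSucc| ≤ 1 / 2 := hLLL.1 _ _ i.castSucc_lt_succ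
  have hmu : mu B i.succ i.castSucc ^ 2 ≤ 1 / 4 := by
    nlinarith [sq_abs (mu B i.succ i.castSucc), abs_nonneg (mu B i.succ i.castSucc)]
  rw [norm_add_sq_real, real_inner_smul_left,
    gramSchmidt_orthogonal ℝ B i.castSucc_lt_succ.ne, norm_smul, mul_pow] at hlovasz
  simp only [Real.norm_eq_abs, sq_abs, mul_zero, add_zero] at hlovasz
  nlinarith [sq_nonneg ‖gramSchmidt ℝ B i.castSucc‖]

lemma norm_gramSchmidt_zero_sq_le (hLLL : LLLReduced B) (j : Fin (n + 1)) :
    ‖gramSchmidt ℝ B 0‖ ^ 2 ≤ 2 ^ (j : ℕ) * ‖gramSchmidt ℝ B j‖ ^ 2 := by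
  induction j using Fin.induction with
  | zero => simp
  | succ i ih =>
    calc ‖gramSchmidt ℝ B 0‖ ^ 2 ≤ 2 ^ (i : ℕ) * ‖gramSchmidt ℝ B i.castSucc‖ ^ 2 := ih
      _ ≤ 2 ^ (i : ℕ) * (2 * ‖gramSchmidt ℝ B i.succ‖ ^ 2) :=
        mul_le_mul_of_nonneg_left (hLLL.norm_gramSchmidt_castSucc_sq_le i) (by positivity)
      _ = 2 ^ (i.succ : ℕ) * ‖gramSchmidt ℝ B i.succ‖ ^ 2 := by rw [Fin.val_succ, pow_succ]; ring

lemma sq_sum_mul_mu_le (hB : LinearIndependent ℝ B) (hLLL : LLLReduced B) {x : Fin (n + 1) → ℝ}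
    (hx : ‖∑ i, x i • B i‖ ≤ ‖B 0‖) (j : Fin (n + 1)) :
    (∑ i, x i * mu B i j) ^ 2 ≤ 2 ^ (j : ℕ) := by
  set c := ∑ i, x i * mu B i j
  set g := gramSchmidt ℝ B
  have hj : g j ≠ 0 := gramSchmidt_ne_zero j hB
  have hpos : 0 < ‖g j‖ := norm_pos_iff.mpr hj
  have hcs := abs_real_inner_le_norm (g j) (∑ i, x i • B i)
  rw [inner_gramSchmidt_sum_smul hj, abs_mul, abs_of_nonneg (sq_nonneg ‖g j‖)] at hcs
  have hc : |c| * ‖g j‖ ≤ ‖g 0‖ := by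
    have h0 : g 0 = B 0 := gramSchmidt_bot ℝ B
    refine h0 ▸ le_trans (le_of_mul_le_mul_left ?_ hpos) hx
    linarith
  have hsq : c ^ 2 * ‖g j‖ ^ 2 ≤ 2 ^ (j : ℕ) * ‖g j‖ ^ 2 := by
    calc c ^ 2 * ‖g j‖ ^ 2 = (|c| * ‖g j‖) ^ 2 := by rw [mul_pow, sq_abs]
      _ ≤ ‖g 0‖ ^ 2 := pow_le_pow_left₀ (by positivity) hc 2
      _ ≤ 2 ^ (j : ℕ) * ‖g j‖ ^ 2 := hLLL.norm_gramSchmidt_zero_sq_le j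
  exact le_of_mul_le_mul_right hsq (by positivity)

lemma abs_le_of_norm_sum_smul_le (hB : LinearIndependent ℝ B) (hLLL : LLLReduced B)
    {x : Fin (n + 1) → ℝ} (hx : ‖∑ i, x i • B i‖ ≤ ‖B 0‖) (j : Fin (n + 1)) :
    |x j| ≤ 2 ^ (2 * n) := by
  have hc : ∀ j : Fin (n + 1), |∑ i, x i * mu B i j| ≤ 2 ^ n := fun j => by
    refine abs_le_of_sq_le_sq ((hLLL.sq_sum_mul_mu_le hB hx j).trans ?_) (by positivity)
    calc (2 : ℝ) ^ (j : ℕ) ≤ 2 ^ n := pow_le_pow_right₀ one_le_two (Nat.lt_succ_iff.mp j.2)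
      _ ≤ (2 ^ n) ^ 2 := by rw [← pow_mul]; exact pow_le_pow_right₀ one_le_two (by omega)
  have ha : ∀ j, |x j| ≤ 2 ^ n + (∑ i ∈ Ioi j, |x i|) / 2 := fun j => by
    have htail : |∑ i ∈ Ioi j, x i * mu B i j| ≤ (∑ i ∈ Ioi j, |x i|) / 2 := by
      rw [sum_div]
      refine (abs_sum_le_sum_abs _ _).trans (sum_le_sum fun i hi => ?_)
      rw [abs_mul]
      nlinarith [hLLL.1 i j (mem_Ioi.mp hi), abs_nonneg (x i)]
    calc |x j| = |(∑ i, x i * mu B i j) - ∑ i ∈ Ioi j, x i * mu B i j| := by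
          rw [sum_mul_mu_eq_add_sum_Ioi (gramSchmidt_ne_zero j hB), add_sub_cancel_right]
      _ ≤ |∑ i, x i * mu B i j| + |∑ i ∈ Ioi j, x i * mu B i j| := abs_sub _ _
      _ ≤ 2 ^ n + (∑ i ∈ Ioi j, |x i|) / 2 := add_le_add (hc j) htail
  calc |x j| ≤ 2 ^ n * (3 / 2) ^ (n - j : ℕ) := le_mul_pow_of_le_add_half_sum_Ioi ha j
    _ ≤ 2 ^ n * 2 ^ n := by
      gcongr
      calc ((3 : ℝ) / 2) ^ (n - j : ℕ) ≤ 2 ^ (n - j : ℕ) := by gcongr; norm_num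
        _ ≤ 2 ^ n := pow_le_pow_right₀ one_le_two (Nat.sub_le n j)
    _ = 2 ^ (2 * n) := by rw [two_mul, pow_add]

lemma sq_coeff_le_of_norm_eq_lambda1 (hB : LinearIndependent ℝ B) (hLLL : LLLReduced B)
    {α : Fin (n + 1) → ℤ} (h : ‖∑ i, (α i : ℝ) • B i‖ = lambda1 (latticeOf B)) (j : Fin (n + 1)) :
    α j ^ 2 ≤ 2 ^ (4 * n) := by
  have hx := h.trans_le (lambda1_le_norm (mem_latticeOf_self B 0) (hB.ne_zero 0))
  have hαj : |α j| ≤ 2 ^ (2 * n) := by exact_mod_cast hLLL.abs_le_of_norm_sum_smul_le hB hx j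
  rw [← sq_abs, show 4 * n = 2 * n * 2 by ring, pow_mul]
  exact pow_le_pow_left₀ (abs_nonneg _) hαj 2

end LLLReduced

/-- For a 3/4-LLL reduced basis `B`, if `v₁ = ∑ αᵢ bᵢ` and `v₂ = ∑ βᵢ bᵢ`
are both shortest nonzero lattice vectors with `v₁ ≠ ±v₂`, then the corresponding
lifted vectors satisfy `|‖v₁'‖² - ‖v₂'‖²| ≥ 2^{-4n²}`. -/
theorem stmt2 {m n : ℕ} (B : Fin n → EuclideanSpace ℝ (Fin m))
    (hB : LinearIndependent ℝ B) (hLLL : LLLReduced B)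
    (α β : Fin n → ℤ)
    (h₁ : ‖∑ i, (α i : ℝ) • B i‖ = lambda1 (latticeOf B))
    (h₂ : ‖∑ i, (β i : ℝ) • B i‖ = lambda1 (latticeOf B))
    (hne : (∑ i, (α i : ℝ) • B i) ≠ ∑ i, (β i : ℝ) • B i)
    (hne' : (∑ i, (α i : ℝ) • B i) ≠ -∑ i, (β i : ℝ) • B i) :
    ((2 : ℝ) ^ (4 * n ^ 2))⁻¹ ≤
      |‖∑ i, (α i : ℝ) • lifted B i‖ ^ 2 - ‖∑ i, (β i : ℝ) • lifted B i‖ ^ 2| := by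
  obtain _ | n := n
  · exact absurd (by simp) hne
  set S : ℤ := ∑ i : Fin (n + 1), (α i ^ 2 - β i ^ 2) * (2 ^ (4 * (n + 1))) ^ (i : ℕ)
  have hS : S ≠ 0 := by
    have hdigit : ∀ j, |α j ^ 2 - β j ^ 2| < 2 ^ (4 * (n + 1)) := fun j =>
      (abs_sub_le_of_nonneg_of_le (sq_nonneg _) (hLLL.sq_coeff_le_of_norm_eq_lambda1 hB h₁ j)
        (sq_nonneg _) (hLLL.sq_coeff_le_of_norm_eq_lambda1 hB h₂ j)).trans_lt
        (pow_lt_pow_right₀ one_lt_two (by omega))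
    obtain ⟨i, hi⟩ := exists_sq_ne_of_norm_eq_lambda1 h₁ h₂ hne hne'
    exact fun hS => hi (sub_eq_zero.mp
      (congrFun (Int.eq_zero_of_sum_mul_pow_eq_zero hdigit hS) i))
  have hdiff : ‖∑ i, (α i : ℝ) • lifted B i‖ ^ 2 - ‖∑ i, (β i : ℝ) • lifted B i‖ ^ 2 =
      S / 2 ^ (4 * (n + 1) ^ 2) := by
    rw [norm_sum_smul_lifted_sq, norm_sum_smul_lifted_sq, h₁, h₂]
    push_cast [S, sub_mul, sum_sub_distrib]
    ring
  rw [hdiff, abs_div, abs_of_pos (by positivity : (0 : ℝ) < 2 ^ (4 * (n + 1) ^ 2)),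
    inv_eq_one_div]
  gcongr
  exact_mod_cast Int.one_le_abs hS

end
end

section
/- Let n ≥ 2, let B = (b_1, …, b_n) be a basis of ℝ^n with lattice L = L(B), and let S = (s_1, …, s_n) be a basis of a full-rank sublattice M = L(S) ⊆ L such that |det S| ≥ 2^t · |det B| for a real number t > n(n + log₂ n), where det denotes the determinant of the matrix whose columns are the basis vectors. Let u ∈ M be a vector with ‖u‖ = λ1(L), and let M* = {v ∈ ℝ^n : ⟨v, w⟩ ∈ ℤ for all w ∈ M} be the dual lattice of M. Then every v ∈ M* with ‖v‖ ≤ 2^n · √n · |det S|^{-1/n} satisfies ⟨u, v⟩ = 0. -/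
/-!
Minkowski's theorem, applied to the cube `[-c, c]ⁿ` of volume `2ⁿ |det B|` with
`c = |det B|^{1/n}`, gives `λ₁(L) ≤ √n |det B|^{1/n}`. Hence
`|⟨u, v⟩| ≤ ‖u‖ ‖v‖ ≤ n 2ⁿ (|det B| / |det S|)^{1/n} ≤ n 2ⁿ 2^{-t/n} < 1`,
and `⟨u, v⟩` is an integer because `u ∈ M` and `v ∈ M*`, so it vanishes.
-/

noncomputable section

/-- The matrix whose columns are the vectors `B 1, …, B n`. -/
def colMatrix {n : ℕ} (B : Fin n → EuclideanSpace ℝ (Fin n)) : Matrix (Fin n) (Fin n) ℝ :=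
  Matrix.of fun i j => B j i

open MeasureTheory Module Submodule ZSpan

section EuclideanSpace

variable {ι : Type*} [Fintype ι]

theorem EuclideanSpace.volume_preimage_ofLp_closedBall (c : ℝ) (hc : 0 ≤ c) :
    volume (WithLp.ofLp ⁻¹' Metric.closedBall (0 : ι → ℝ) c : Set (EuclideanSpace ℝ ι)) =
      ENNReal.ofReal ((2 * c) ^ Fintype.card ι) := by
  rw [(PiLp.volume_preserving_ofLp ι).measure_preimage measurableSet_closedBall.nullMeasurableSet,
    Real.volume_pi_closedBall _ hc]

theorem EuclideanSpace.norm_le_sqrt_card_mul_norm_ofLp (x : EuclideanSpace ℝ ι) :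
    ‖x‖ ≤ √(Fintype.card ι) * ‖WithLp.ofLp x‖ := by
  rw [EuclideanSpace.norm_eq, ← Real.sqrt_sq (norm_nonneg (WithLp.ofLp x)),
    ← Real.sqrt_mul (by positivity)]
  gcongr
  calc ∑ i, ‖x i‖ ^ 2 ≤ ∑ _i : ι, ‖WithLp.ofLp x‖ ^ 2 := by
        gcongr with i
        exact norm_le_pi_norm (WithLp.ofLp x) i
    _ = _ := by simp

theorem EuclideanSpace.volume_fundamentalDomain [DecidableEq ι]
    (b : Basis ι ℝ (EuclideanSpace ℝ ι)) :
    volume (fundamentalDomain b) =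
      ENNReal.ofReal |(EuclideanSpace.basisFun ι ℝ).toBasis.det b| := by
  rw [measure_fundamentalDomain b volume (EuclideanSpace.basisFun ι ℝ).toBasis,
    measure_congr (fundamentalDomain_ae_parallelepiped _ volume),
    OrthonormalBasis.coe_toBasis, OrthonormalBasis.volume_parallelepiped, mul_one]

theorem EuclideanSpace.exists_ne_zero_mem_span_norm_le [Nonempty ι]
    (b : Basis ι ℝ (EuclideanSpace ℝ ι)) :
    ∃ x ∈ span ℤ (Set.range b), x ≠ 0 ∧
      ‖x‖ ≤ √(Fintype.card ι) *
        volume.real (fundamentalDomain b) ^ (1 / (Fintype.card ι : ℝ)) := by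
  set c := volume.real (fundamentalDomain b) ^ (1 / (Fintype.card ι : ℝ))
  have hc : 0 ≤ c := by positivity
  have hcpow : c ^ Fintype.card ι = volume.real (fundamentalDomain b) := by
    rw [← Real.rpow_natCast, ← Real.rpow_mul measureReal_nonneg, one_div_mul_cancel (by simp),
      Real.rpow_one]
  let box : Set (EuclideanSpace ℝ ι) := WithLp.ofLp ⁻¹' Metric.closedBall 0 c
  have h_symm : ∀ x ∈ box, -x ∈ box := fun x hx => by simpa [box] using hx
  have h_conv : Convex ℝ box :=
    (convex_closedBall 0 c).linear_preimage (WithLp.linearEquiv 2 ℝ (ι → ℝ)).toLinearMap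
  have h_cpt : IsCompact box :=
    (PiLp.homeomorph 2 (fun _ : ι => ℝ)).isCompact_preimage.mpr (isCompact_closedBall 0 c)
  have h_vol : volume (fundamentalDomain b) * 2 ^ finrank ℝ (EuclideanSpace ℝ ι) ≤
      volume box := by
    rw [EuclideanSpace.volume_preimage_ofLp_closedBall c hc, finrank_euclideanSpace, mul_pow,
      hcpow, ENNReal.ofReal_mul (by positivity),
      ofReal_measureReal (fundamentalDomain_isBounded b).measure_lt_top.ne,
      ENNReal.ofReal_pow zero_le_two, ENNReal.ofReal_ofNat, mul_comm]
  have : Countable (span ℤ (Set.range b)).toAddSubgroup :=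
    inferInstanceAs (Countable (span ℤ (Set.range b)))
  obtain ⟨⟨x, hxL⟩, hx0, hxbox⟩ :=
    exists_ne_zero_mem_lattice_of_measure_mul_two_pow_le_measure
      (ZSpan.isAddFundamentalDomain' b volume) h_symm h_conv h_cpt h_vol
  refine ⟨x, hxL, by simpa using hx0, ?_⟩
  calc ‖x‖ ≤ √(Fintype.card ι) * ‖WithLp.ofLp x‖ :=
        EuclideanSpace.norm_le_sqrt_card_mul_norm_ofLp x
    _ ≤ √(Fintype.card ι) * c := by gcongr; simpa [box] using hxbox

end EuclideanSpace

theorem det_basisFun_eq_colMatrix_det {n : ℕ} (B : Fin n → EuclideanSpace ℝ (Fin n)) :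
    (EuclideanSpace.basisFun (Fin n) ℝ).toBasis.det B = (colMatrix B).det := by
  rw [Basis.det_apply]
  rfl

theorem latticeOf_eq_span {m n : ℕ} (B : Fin n → EuclideanSpace ℝ (Fin m)) :
    latticeOf B = span ℤ (Set.range B) := by
  ext v
  simp [latticeOf, mem_span_range_iff_exists_fun, Int.cast_smul_eq_zsmul, eq_comm]

theorem colMatrix_det_ne_zero {n : ℕ} {B : Fin n → EuclideanSpace ℝ (Fin n)}
    (hB : LinearIndependent ℝ B) : (colMatrix B).det ≠ 0 := by
  rw [← det_basisFun_eq_colMatrix_det]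
  exact ((EuclideanSpace.basisFun (Fin n) ℝ).toBasis.is_basis_iff_det.mp
    ⟨hB, hB.span_eq_top_of_card_eq_finrank' (by simp)⟩).ne_zero

theorem lambda1_latticeOf_le {n : ℕ} (hn : 0 < n) {B : Fin n → EuclideanSpace ℝ (Fin n)}
    (hB : LinearIndependent ℝ B) :
    lambda1 (latticeOf B) ≤ √n * |(colMatrix B).det| ^ (1 / (n : ℝ)) := by
  have : Nonempty (Fin n) := ⟨⟨0, hn⟩⟩
  let b := basisOfLinearIndependentOfCardEqFinrank' B hB (by simp)
  obtain ⟨x, hxL, hx0, hx⟩ := EuclideanSpace.exists_ne_zero_mem_span_norm_le b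
  rw [measureReal_def, EuclideanSpace.volume_fundamentalDomain,
    ENNReal.toReal_ofReal (abs_nonneg _), coe_basisOfLinearIndependentOfCardEqFinrank',
    det_basisFun_eq_colMatrix_det, Fintype.card_fin] at hx
  rw [coe_basisOfLinearIndependentOfCardEqFinrank'] at hxL
  have hxB : x ∈ latticeOf B := by rw [latticeOf_eq_span]; exact hxL
  refine le_trans (csInf_le ⟨0, ?_⟩ ⟨x, hxB, hx0, rfl⟩) hx
  rintro r ⟨w, -, -, rfl⟩
  exact norm_nonneg w

theorem natCast_mul_two_pow_lt_two_rpow {n : ℕ} (hn : 0 < n) {t : ℝ}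
    (ht : n * (n + Real.logb 2 n) < t) : (n : ℝ) * 2 ^ n < 2 ^ (t / n) := by
  have hn' : (0 : ℝ) < n := by exact_mod_cast hn
  have h2 : (n : ℝ) * 2 ^ n = 2 ^ ((n : ℝ) + Real.logb 2 n) := by
    rw [Real.rpow_add two_pos, Real.rpow_natCast, Real.rpow_logb two_pos (by norm_num) hn',
      mul_comm]
  rw [h2, Real.rpow_lt_rpow_left_iff one_lt_two, lt_div_iff₀ hn']
  linarith

theorem sqrt_mul_rpow_mul_lt_one {n : ℕ} (hn : 0 < n) {t D D' : ℝ} (hD : 0 < D)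
    (ht : n * (n + Real.logb 2 n) < t) (hdet : 2 ^ t * D ≤ D') :
    √n * D ^ (1 / (n : ℝ)) * (2 ^ n * √n * D' ^ (-(1 : ℝ) / n)) < 1 := by
  have hD' : 0 < D' := lt_of_lt_of_le (by positivity) hdet
  have hratio : (D / D') ^ (1 / (n : ℝ)) ≤ 2 ^ (-(t / n)) := by
    calc (D / D') ^ (1 / (n : ℝ)) ≤ ((2 : ℝ) ^ (-t)) ^ (1 / (n : ℝ)) := by
          gcongr
          rw [Real.rpow_neg zero_le_two, div_le_iff₀ hD', inv_mul_eq_div,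
            le_div_iff₀ (by positivity), mul_comm]
          exact hdet
      _ = 2 ^ (-(t / n)) := by rw [← Real.rpow_mul zero_le_two]; ring_nf
  calc √n * D ^ (1 / (n : ℝ)) * (2 ^ n * √n * D' ^ (-(1 : ℝ) / n))
      = (√n * √n) * 2 ^ n * (D / D') ^ (1 / (n : ℝ)) := by
        rw [Real.div_rpow hD.le hD'.le, neg_div, Real.rpow_neg hD'.le]
        ring
    _ = n * 2 ^ n * (D / D') ^ (1 / (n : ℝ)) := by rw [Real.mul_self_sqrt (Nat.cast_nonneg n)]
    _ ≤ n * 2 ^ n * 2 ^ (-(t / n)) := by gcongr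
    _ < 2 ^ (t / n) * 2 ^ (-(t / n)) := by gcongr; exact natCast_mul_two_pow_lt_two_rpow hn ht
    _ = 1 := by rw [← Real.rpow_add two_pos, add_neg_cancel, Real.rpow_zero]

theorem stmt11_general {n : ℕ} (B S : Fin n → EuclideanSpace ℝ (Fin n))
    (hB : LinearIndependent ℝ B)
    (t : ℝ) (ht : (n : ℝ) * ((n : ℝ) + Real.logb 2 (n : ℝ)) < t)
    (hdet : (2 : ℝ) ^ t * |(colMatrix B).det| ≤ |(colMatrix S).det|)
    (u : EuclideanSpace ℝ (Fin n)) (huM : u ∈ latticeOf S)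
    (hu : ‖u‖ = lambda1 (latticeOf B)) :
    ∀ v : EuclideanSpace ℝ (Fin n),
      (∀ w ∈ latticeOf S, ∃ z : ℤ, (inner ℝ v w : ℝ) = (z : ℝ)) →
      ‖v‖ ≤ 2 ^ n * Real.sqrt n * |(colMatrix S).det| ^ (-(1 : ℝ) / n) →
      (inner ℝ u v : ℝ) = 0 := by
  intro v hv hv_norm
  obtain rfl | hn := n.eq_zero_or_pos
  · simp [Subsingleton.elim u 0]
  obtain ⟨z, hz⟩ := hv u huM
  have huv : ‖u‖ * ‖v‖ < 1 := calc
    ‖u‖ * ‖v‖ ≤ (√n * |(colMatrix B).det| ^ (1 / (n : ℝ))) *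
        (2 ^ n * √n * |(colMatrix S).det| ^ (-(1 : ℝ) / n)) := by
      gcongr
      exact hu ▸ lambda1_latticeOf_le hn hB
    _ < 1 := sqrt_mul_rpow_mul_lt_one hn (abs_pos.2 (colMatrix_det_ne_zero hB)) ht hdet
  have hz1 : |(z : ℝ)| < 1 := hz ▸ (abs_real_inner_le_norm v u).trans_lt (by rwa [mul_comm])
  have hz0 : z = 0 := Int.abs_lt_one_iff.mp (by exact_mod_cast hz1)
  rw [real_inner_comm, hz, hz0, Int.cast_zero]

/-- Let `n ≥ 2`, `B` a basis of `ℝⁿ` with lattice `L = L(B)`, and `S` a basis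
of a full-rank sublattice `M = L(S) ⊆ L` with `|det S| ≥ 2^t |det B|` for a real
`t > n(n + log₂ n)`. If `u ∈ M` has `‖u‖ = λ₁(L)`, then every `v` in the dual lattice
`M* = {v : ⟨v, w⟩ ∈ ℤ for all w ∈ M}` with `‖v‖ ≤ 2ⁿ·√n·|det S|^{-1/n}` satisfies
`⟨u, v⟩ = 0`. -/
theorem stmt11 {n : ℕ} (hn : 2 ≤ n) (B S : Fin n → EuclideanSpace ℝ (Fin n))
    (hB : LinearIndependent ℝ B) (hS : LinearIndependent ℝ S)
    (hsub : latticeOf S ⊆ latticeOf B)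
    (t : ℝ) (ht : (n : ℝ) * ((n : ℝ) + Real.logb 2 (n : ℝ)) < t)
    (hdet : (2 : ℝ) ^ t * |(colMatrix B).det| ≤ |(colMatrix S).det|)
    (u : EuclideanSpace ℝ (Fin n)) (huM : u ∈ latticeOf S)
    (hu : ‖u‖ = lambda1 (latticeOf B)) :
    ∀ v : EuclideanSpace ℝ (Fin n),
      (∀ w ∈ latticeOf S, ∃ z : ℤ, (inner ℝ v w : ℝ) = (z : ℝ)) →
      ‖v‖ ≤ 2 ^ n * Real.sqrt n * |(colMatrix S).det| ^ (-(1 : ℝ) / n) →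
      (inner ℝ u v : ℝ) = 0 :=
  stmt11_general B S hB t ht hdet u huM hu

end
end
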